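/- arXiv:1612.09117 — 3 statements merged into one kernel-verified Lean document; each statement's English description precedes it below -/
import Mathlib

section
/- Let 1<p<∞, let u_E be the capacitary potential of a set E in a bounded open set Ω (so ∫_Ω g_E^p dμ = cap_p(E,Ω) < ∞), and for 0<M<1 let E_M = {x ∈ Ω : u_E(x) > M}. Then cap_p(E_M, Ω) = M^{1-p} cap_p(E, Ω). -/
open MeasureTheory Metric Set
open scoped ENNReal NNReal

/-- `g` is a (genuine) upper gradient of `u`: along every rectifiable curve,
parameterized by arc length as a `1`-Lipschitz map on `[0,L]`, the fundamental
theorem of calculus estimate holds. -/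
def IsUpperGradient {X : Type*} [MetricSpace X] (u : X → ℝ) (g : X → ℝ) : Prop :=
  ∀ (L : ℝ) (γ : ℝ → X), 0 ≤ L → LipschitzOnWith 1 γ (Set.Icc 0 L) →
    |u (γ L) - u (γ 0)| ≤ ∫ t in (0:ℝ)..L, g (γ t)

/-- The variational `p`-capacity of `E` inside the open set `Ω`. -/
noncomputable def varCap {X : Type*} [MetricSpace X] [MeasurableSpace X] (p : ℝ)
    (μ : Measure X) (E Ω : Set X) : ℝ≥0∞ :=
  ⨅ (u : X → ℝ) (_ : (∀ x ∈ E, u x = 1) ∧ ∀ x ∉ Ω, u x = 0)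
    (g : X → ℝ) (_ : IsUpperGradient u g ∧ ∀ x, 0 ≤ g x),
      ∫⁻ x in Ω, ENNReal.ofReal (g x ^ p) ∂μ

/-- The measure `μ` is doubling (and nondegenerate on balls). -/
def IsDoubling {X : Type*} [MetricSpace X] [MeasurableSpace X] (μ : Measure X) : Prop :=
  ∃ C : ℝ≥0∞, ∀ (x : X) (r : ℝ), 0 < r →
    0 < μ (ball x r) ∧ μ (ball x r) < ⊤ ∧ μ (ball x (2*r)) ≤ C * μ (ball x r)

/-- `X` supports a `p`-Poincaré inequality. -/
def SupportsPoincare {X : Type*} [MetricSpace X] [MeasurableSpace X] (p : ℝ)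
    (μ : Measure X) : Prop :=
  ∃ (C lam : ℝ), 0 < C ∧ 1 ≤ lam ∧
    ∀ (x : X) (r : ℝ), 0 < r → ∀ f g : X → ℝ, IsUpperGradient f g → (∀ y, 0 ≤ g y) →
      ⨍ y in ball x r, |f y - ⨍ z in ball x r, f z ∂μ| ∂μ ≤
        C * (2*r) * (⨍ y in ball x (lam*r), g y ^ p ∂μ) ^ (1/p)

/-!
Write `U = {u_E > M}`, which is open by lower semicontinuity, and split the energy of `u_E` as
`A + B`, with `A` over `Ω \ U` and `B` over `U`. A function `G ≥ 0` whose integral along every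
curve from `X \ Ω` to `E` is at least `1` bounds `cap_p(E, Ω)` by its energy: the competitor is
`x ↦ min (1, inf of the G-lengths of the curves from X \ Ω to x)`. Along such a curve `u_E`
climbs from `0` through `M` to `1`, so `g_E` integrates to at least `M` on `Ω \ U` and to at
least `1 - M` on `U`. Hence `a g_E` on `Ω \ U` and `b g_E` on `U` is admissible whenever
`a M + b (1 - M) = 1`, so `cap_p(E, Ω) ≤ a^p A + b^p B` with equality at `a = b = 1`; the first
variation at `a = b = 1` vanishes, i.e. `A = M cap_p(E, Ω)`. Finally `a = 1/M, b = 0`, tested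
on curves ending in `U`, gives `cap_p(U, Ω) ≤ M^{-p} A`, and for any competitor `(v, h)` for
`U`, `M h` on `X \ U` and `g_E` on `U` is admissible for `E`, which gives
`A ≤ M^p cap_p(U, Ω)`.
-/

open Topology

section Interval

variable {h ψ φ : ℝ → ℝ} {L a b : ℝ}

theorem continuousOn_of_abs_sub_le_integral (hL : 0 ≤ L) (hψ : IntervalIntegrable ψ volume 0 L)
    (hbd : ∀ s t, 0 ≤ s → s ≤ t → t ≤ L → |h t - h s| ≤ ∫ τ in s..t, ψ τ) :
    ContinuousOn h (Icc 0 L) := by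
  set P : ℝ → ℝ := fun t => ∫ τ in 0..t, ψ τ
  have hP : ContinuousOn P (Icc 0 L) := by
    simpa [uIcc_of_le hL] using
      intervalIntegral.continuousOn_primitive_interval' hψ left_mem_uIcc
  have hψ' : ∀ t ∈ Icc 0 L, IntervalIntegrable ψ volume 0 t := fun t ht =>
    hψ.mono_set (uIcc_subset_uIcc left_mem_uIcc (mem_uIcc_of_le ht.1 ht.2))
  have hmono : ∀ s ∈ Icc 0 L, ∀ t ∈ Icc 0 L, s ≤ t → dist (h t) (h s) ≤ dist (P t) (P s) := by
    intro s hs t ht hst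
    calc dist (h t) (h s) ≤ ∫ τ in s..t, ψ τ := hbd s t hs.1 hst ht.2
      _ = P t - P s := (intervalIntegral.integral_interval_sub_left (hψ' t ht) (hψ' s hs)).symm
      _ ≤ dist (P t) (P s) := le_abs_self _
  have hdom : ∀ s ∈ Icc 0 L, ∀ t ∈ Icc 0 L, dist (h t) (h s) ≤ dist (P t) (P s) := by
    intro s hs t ht
    rcases le_total s t with hst | hts
    · exact hmono s hs t ht hst
    · rw [dist_comm, dist_comm (P t)]
      exact hmono t ht s hs hts
  intro t ht
  refine Metric.continuousWithinAt_iff.2 fun ε hε => ?_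
  obtain ⟨δ, hδ, hPδ⟩ := Metric.continuousWithinAt_iff.1 (hP t ht) ε hε
  exact ⟨δ, hδ, fun {s} hs hst => (hdom t ht s hs).trans_lt (hPδ hs hst)⟩

theorem sub_le_integral_of_crossing (hL : 0 ≤ L) (hψ : IntervalIntegrable ψ volume 0 L)
    (hφ : IntervalIntegrable φ volume 0 L) (hφ0 : ∀ τ, 0 ≤ φ τ)
    (hbd : ∀ s t, 0 ≤ s → s ≤ t → t ≤ L → |h t - h s| ≤ ∫ τ in s..t, ψ τ)
    (hψφ : ∀ τ, h τ ∈ Ioo a b → ψ τ ≤ φ τ) (h0 : h 0 ≤ a) (hb : b ≤ h L) :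
    b - a ≤ ∫ τ in 0..L, φ τ := by
  have hc := continuousOn_of_abs_sub_le_integral hL hψ hbd
  -- `t` is the first time `h` reaches `b`, and `s ≤ t` the last time before it that `h ≤ a`
  set T := Icc 0 L ∩ h ⁻¹' Ici b
  have htT : sInf T ∈ T :=
    (hc.preimage_isClosed_of_isClosed isClosed_Icc isClosed_Ici).csInf_mem
      ⟨L, ⟨hL, le_rfl⟩, hb⟩ ⟨0, fun τ hτ => hτ.1.1⟩
  set t := sInf T
  set S := Icc 0 t ∩ h ⁻¹' Iic a
  have hsS : sSup S ∈ S :=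
    ((hc.mono (Icc_subset_Icc le_rfl htT.1.2)).preimage_isClosed_of_isClosed isClosed_Icc
      isClosed_Iic).csSup_mem ⟨0, ⟨le_rfl, htT.1.1⟩, h0⟩ ⟨t, fun τ hτ => hτ.1.2⟩
  set s := sSup S
  have hcross : ∀ τ ∈ Ioo s t, h τ ∈ Ioo a b := by
    rintro τ ⟨hsτ, hτt⟩
    have hτ0 : 0 ≤ τ := hsS.1.1.trans hsτ.le
    constructor
    · by_contra! hle
      exact hsτ.not_ge (le_csSup ⟨t, fun _ hr => hr.1.2⟩ ⟨⟨hτ0, hτt.le⟩, hle⟩)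
    · by_contra! hle
      exact hτt.not_ge (csInf_le ⟨0, fun _ hr => hr.1.1⟩ ⟨⟨hτ0, hτt.le.trans htT.1.2⟩, hle⟩)
  have hst : uIcc s t ⊆ uIcc 0 L :=
    uIcc_subset_uIcc (mem_uIcc_of_le hsS.1.1 (hsS.1.2.trans htT.1.2))
      (mem_uIcc_of_le htT.1.1 htT.1.2)
  calc b - a ≤ h t - h s := sub_le_sub htT.2 hsS.2
    _ ≤ ∫ τ in s..t, ψ τ := (le_abs_self _).trans (hbd s t hsS.1.1 hsS.1.2 htT.1.2)
    _ ≤ ∫ τ in s..t, φ τ :=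
      intervalIntegral.integral_mono_on_of_le_Ioo hsS.1.2 (hψ.mono_set hst) (hφ.mono_set hst)
        fun τ hτ => hψφ τ (hcross τ hτ)
    _ ≤ ∫ τ in 0..L, φ τ :=
      intervalIntegral.integral_mono_interval hsS.1.1 hsS.1.2 htT.1.2 (ae_of_all _ hφ0) hφ

end Interval

section Lipschitz

variable {X : Type*} [MetricSpace X]

theorem LipschitzOnWith.comp_isometryEquiv {f : ℝ → X} {s t : Set ℝ}
    (hf : LipschitzOnWith 1 f t) (e : ℝ ≃ᵢ ℝ) (hst : MapsTo e s t) :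
    LipschitzOnWith 1 (f ∘ e) s := by
  simpa using hf.comp e.isometry.lipschitz.lipschitzOnWith hst

theorem LipschitzOnWith.Icc_union {f : ℝ → X} {K : ℝ≥0} {a b c : ℝ}
    (hab : LipschitzOnWith K f (Icc a b)) (hbc : LipschitzOnWith K f (Icc b c)) :
    LipschitzOnWith K f (Icc a c) := by
  rw [lipschitzOnWith_iff_dist_le_mul] at hab hbc ⊢
  have key : ∀ x ∈ Icc a c, ∀ y ∈ Icc a c, x ≤ y → dist (f x) (f y) ≤ K * dist x y := by
    intro x hx y hy hxy
    by_cases hyb : y ≤ b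
    · exact hab x ⟨hx.1, hxy.trans hyb⟩ y ⟨hx.1.trans hxy, hyb⟩
    by_cases hxb : b ≤ x
    · exact hbc x ⟨hxb, hxy.trans hy.2⟩ y ⟨hxb.trans hxy, hy.2⟩
    rw [not_le] at hyb hxb
    calc dist (f x) (f y) ≤ dist (f x) (f b) + dist (f b) (f y) := dist_triangle _ _ _
      _ ≤ K * dist x b + K * dist b y :=
        add_le_add (hab x ⟨hx.1, hxb.le⟩ b ⟨hx.1.trans hxb.le, le_rfl⟩)
          (hbc b ⟨le_rfl, hyb.le.trans hy.2⟩ y ⟨hyb.le, hy.2⟩)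
      _ = K * dist x y := by
        rw [Real.dist_eq, Real.dist_eq, Real.dist_eq, abs_of_neg (sub_neg.2 hxb),
          abs_of_neg (sub_neg.2 hyb), abs_of_neg (sub_neg.2 (hxb.trans hyb))]
        ring
  intro x hx y hy
  rcases le_total x y with hxy | hyx
  · exact key x hx y hy hxy
  · rw [dist_comm, dist_comm x]
    exact key y hy x hx hyx

end Lipschitz

section ConcatCurve

variable {X : Type*}

noncomputable def concatCurve (L₁ : ℝ) (δ γ : ℝ → X) (t : ℝ) : X :=
  if t ≤ L₁ then δ t else γ (t - L₁)

variable {L₁ L₂ : ℝ} {δ γ : ℝ → X}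

theorem concatCurve_of_le {t : ℝ} (ht : t ≤ L₁) : concatCurve L₁ δ γ t = δ t := if_pos ht

theorem concatCurve_of_ge (hm : δ L₁ = γ 0) {t : ℝ} (ht : L₁ ≤ t) :
    concatCurve L₁ δ γ t = γ (t - L₁) := by
  rcases ht.lt_or_eq with ht | rfl
  · exact if_neg ht.not_ge
  · rw [concatCurve_of_le le_rfl, sub_self, hm]

theorem integral_concatCurve_le {G : X → ℝ} (hG0 : ∀ x, 0 ≤ G x) (hL₁ : 0 ≤ L₁) (hL₂ : 0 ≤ L₂)
    (hm : δ L₁ = γ 0) :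
    ∫ t in 0..L₁ + L₂, G (concatCurve L₁ δ γ t) ≤
      (∫ t in 0..L₁, G (δ t)) + ∫ t in 0..L₂, G (γ t) := by
  by_cases hI : IntervalIntegrable (fun t => G (concatCurve L₁ δ γ t)) volume 0 (L₁ + L₂)
  · have hL : L₁ ≤ L₁ + L₂ := le_add_of_nonneg_right hL₂
    have e₁ : ∫ t in 0..L₁, G (concatCurve L₁ δ γ t) = ∫ t in 0..L₁, G (δ t) :=
      intervalIntegral.integral_congr fun t ht => by
        rw [concatCurve_of_le (uIcc_of_le hL₁ ▸ ht).2]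
    have e₂ : ∫ t in L₁..L₁ + L₂, G (concatCurve L₁ δ γ t) = ∫ t in 0..L₂, G (γ t) := by
      rw [intervalIntegral.integral_congr (g := fun t => G (γ (t - L₁))) fun t ht => by
        rw [concatCurve_of_ge hm (uIcc_of_le hL ▸ ht).1]]
      simp [intervalIntegral.integral_comp_sub_right fun t => G (γ t)]
    rw [← intervalIntegral.integral_add_adjacent_intervals
      (hI.mono_set (uIcc_subset_uIcc left_mem_uIcc (mem_uIcc_of_le hL₁ hL)))
      (hI.mono_set (uIcc_subset_uIcc (mem_uIcc_of_le hL₁ hL) right_mem_uIcc)), e₁, e₂]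
  · rw [intervalIntegral.integral_undef hI]
    exact add_nonneg (intervalIntegral.integral_nonneg hL₁ fun t _ => hG0 _)
      (intervalIntegral.integral_nonneg hL₂ fun t _ => hG0 _)

variable [MetricSpace X]

theorem lipschitzOnWith_concatCurve (hδ : LipschitzOnWith 1 δ (Icc 0 L₁))
    (hγ : LipschitzOnWith 1 γ (Icc 0 L₂)) (hm : δ L₁ = γ 0) :
    LipschitzOnWith 1 (concatCurve L₁ δ γ) (Icc 0 (L₁ + L₂)) := by
  have hγ' := hγ.comp_isometryEquiv (IsometryEquiv.subRight L₁) (s := Icc L₁ (L₁ + L₂))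
    fun t ht => ⟨by simpa using ht.1, by simpa [add_comm] using ht.2⟩
  refine LipschitzOnWith.Icc_union (b := L₁) (fun s hs t ht => ?_) (fun s hs t ht => ?_)
  · rw [concatCurve_of_le hs.2, concatCurve_of_le ht.2]
    exact hδ hs ht
  · rw [concatCurve_of_ge hm hs.1, concatCurve_of_ge hm ht.1]
    exact hγ' hs ht

end ConcatCurve

section UpperGradient

variable {X : Type*} [MetricSpace X] {u g : X → ℝ} {L : ℝ} {γ : ℝ → X}

theorem IsUpperGradient.abs_sub_le_integral (hug : IsUpperGradient u g)
    (hγ : LipschitzOnWith 1 γ (Icc 0 L)) {s t : ℝ} (hs : 0 ≤ s) (hst : s ≤ t) (ht : t ≤ L) :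
    |u (γ t) - u (γ s)| ≤ ∫ τ in s..t, g (γ τ) := by
  have hγ' := hγ.comp_isometryEquiv (IsometryEquiv.addLeft s) (s := Icc 0 (t - s))
    fun τ hτ => ⟨by simp only [IsometryEquiv.addLeft_apply]; linarith [hτ.1],
      by simp only [IsometryEquiv.addLeft_apply]; linarith [hτ.2]⟩
  simpa [intervalIntegral.integral_comp_add_left fun τ => g (γ τ)] using
    hug (t - s) _ (sub_nonneg.2 hst) hγ'

theorem IsUpperGradient.intervalIntegrable_of_ne (hug : IsUpperGradient u g) (hL : 0 ≤ L)
    (hγ : LipschitzOnWith 1 γ (Icc 0 L)) (hne : u (γ L) ≠ u (γ 0)) :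
    IntervalIntegrable (fun τ => g (γ τ)) volume 0 L := by
  by_contra hI
  have := hug L γ hL hγ
  rw [intervalIntegral.integral_undef hI, abs_nonpos_iff, sub_eq_zero] at this
  exact hne this

theorem intervalIntegrable_indicator_comp_of_isOpen {U : Set X} (hU : IsOpen U) (hL : 0 ≤ L)
    (hγ : ContinuousOn γ (Icc 0 L)) {f : X → ℝ}
    (hf : IntervalIntegrable (fun τ => f (γ τ)) volume 0 L) :
    IntervalIntegrable (fun τ => U.indicator f (γ τ)) volume 0 L := by
  obtain ⟨V, hV, hVU⟩ := _root_.continuousOn_iff'.1 hγ U hU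
  rw [intervalIntegrable_iff_integrableOn_Ioc_of_le hL] at hf ⊢
  refine (hf.indicator hV.measurableSet).congr_fun (fun τ hτ => ?_) measurableSet_Ioc
  have hmem := Set.ext_iff.1 hVU τ
  simp only [mem_inter_iff, mem_preimage, Ioc_subset_Icc_self hτ, and_true] at hmem
  by_cases hτU : γ τ ∈ U
  · simp [hτU, hmem.1 hτU]
  · simp [hτU, mt hmem.2 hτU]

theorem intervalIntegrable_indicator_compl_comp_of_isOpen {U : Set X} (hU : IsOpen U)
    (hL : 0 ≤ L) (hγ : ContinuousOn γ (Icc 0 L)) {f : X → ℝ}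
    (hf : IntervalIntegrable (fun τ => f (γ τ)) volume 0 L) :
    IntervalIntegrable (fun τ => Uᶜ.indicator f (γ τ)) volume 0 L := by
  simpa only [indicator_compl, Pi.sub_apply] using
    hf.sub (intervalIntegrable_indicator_comp_of_isOpen hU hL hγ hf)

theorem IsUpperGradient.sub_le_integral_indicator (hug : IsUpperGradient u g)
    (hg0 : ∀ x, 0 ≤ g x) (hL : 0 ≤ L) (hγ : LipschitzOnWith 1 γ (Icc 0 L)) {S : Set X}
    {a b : ℝ} (hab : a < b) (h0 : u (γ 0) ≤ a) (hb : b ≤ u (γ L))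
    (hS : ∀ x, u x ∈ Ioo a b → x ∈ S)
    (hSγ : IntervalIntegrable (fun τ => S.indicator g (γ τ)) volume 0 L) :
    b - a ≤ ∫ τ in 0..L, S.indicator g (γ τ) :=
  sub_le_integral_of_crossing hL
    (hug.intervalIntegrable_of_ne hL hγ (h0.trans_lt (hab.trans_le hb)).ne') hSγ
    (fun _ => indicator_nonneg (fun x _ => hg0 x) _)
    (fun _ _ hs hst ht => hug.abs_sub_le_integral hγ hs hst ht)
    (fun _ hτ => (indicator_of_mem (hS _ hτ) g).ge) h0 hb

end UpperGradient

section CurveCapacity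

variable {X : Type*} [MetricSpace X] {Ω : Set X} {G : X → ℝ}

def complCurveLengths (Ω : Set X) (G : X → ℝ) (x : X) : Set ℝ :=
  {r | ∃ L γ, 0 ≤ L ∧ LipschitzOnWith 1 γ (Icc 0 L) ∧ γ 0 ∉ Ω ∧ γ L = x ∧
    ∫ t in 0..L, G (γ t) = r}

/-- Inserting `1` caps the value at `1` and avoids the junk value `sInf ∅ = 0`. -/
noncomputable def cappedComplDist (Ω : Set X) (G : X → ℝ) (x : X) : ℝ :=
  sInf (insert 1 (complCurveLengths Ω G x))

theorem zero_mem_lowerBounds_complCurveLengths (hG0 : ∀ x, 0 ≤ G x) (x : X) :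
    0 ∈ lowerBounds (insert 1 (complCurveLengths Ω G x)) := by
  rintro r (rfl | ⟨L, γ, hL, -, -, -, rfl⟩)
  · exact zero_le_one
  · exact intervalIntegral.integral_nonneg hL fun t _ => hG0 _

theorem cappedComplDist_le_of_mem (hG0 : ∀ x, 0 ≤ G x) {x : X} {r : ℝ}
    (hr : r ∈ insert 1 (complCurveLengths Ω G x)) : cappedComplDist Ω G x ≤ r :=
  csInf_le ⟨0, zero_mem_lowerBounds_complCurveLengths hG0 x⟩ hr

theorem exists_mem_complCurveLengths_le (hG0 : ∀ x, 0 ≤ G x) {L : ℝ} {γ : ℝ → X} (hL : 0 ≤ L)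
    (hγ : LipschitzOnWith 1 γ (Icc 0 L)) {r : ℝ} (hr : r ∈ complCurveLengths Ω G (γ 0)) :
    ∃ r' ∈ complCurveLengths Ω G (γ L), r' ≤ r + ∫ t in 0..L, G (γ t) := by
  obtain ⟨L₁, δ, hL₁, hδ, hδ0, hδγ, rfl⟩ := hr
  refine ⟨_, ⟨L₁ + L, concatCurve L₁ δ γ, add_nonneg hL₁ hL,
    lipschitzOnWith_concatCurve hδ hγ hδγ, ?_, ?_, rfl⟩, integral_concatCurve_le hG0 hL₁ hL hδγ⟩
  · rwa [concatCurve_of_le hL₁]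
  · rw [concatCurve_of_ge hδγ (le_add_of_nonneg_right hL), add_sub_cancel_left]

theorem cappedComplDist_le_add (hG0 : ∀ x, 0 ≤ G x) {L : ℝ} {γ : ℝ → X} (hL : 0 ≤ L)
    (hγ : LipschitzOnWith 1 γ (Icc 0 L)) :
    cappedComplDist Ω G (γ L) ≤ cappedComplDist Ω G (γ 0) + ∫ t in 0..L, G (γ t) := by
  have hI : 0 ≤ ∫ t in 0..L, G (γ t) := intervalIntegral.integral_nonneg hL fun t _ => hG0 _
  rw [← sub_le_iff_le_add]
  refine le_csInf (insert_nonempty _ _) ?_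
  rintro r (rfl | hr)
  · linarith [cappedComplDist_le_of_mem hG0 (mem_insert 1 (complCurveLengths Ω G (γ L)))]
  · obtain ⟨r', hr', hle⟩ := exists_mem_complCurveLengths_le hG0 hL hγ hr
    linarith [cappedComplDist_le_of_mem hG0 (mem_insert_of_mem 1 hr')]

theorem isUpperGradient_cappedComplDist (hG0 : ∀ x, 0 ≤ G x) :
    IsUpperGradient (cappedComplDist Ω G) G := by
  intro L γ hL hγ
  have hrev := cappedComplDist_le_add (Ω := Ω) hG0 hL
    (hγ.comp_isometryEquiv (IsometryEquiv.subLeft L) fun t ht =>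
      ⟨by simp [ht.2], by simp [ht.1]⟩)
  simp only [Function.comp_apply, IsometryEquiv.subLeft_apply, sub_self, sub_zero,
    intervalIntegral.integral_comp_sub_left fun t => G (γ t)] at hrev
  rw [abs_sub_le_iff]
  constructor <;> linarith [cappedComplDist_le_add (Ω := Ω) hG0 hL hγ]

theorem cappedComplDist_eq_zero (hG0 : ∀ x, 0 ≤ G x) {x : X} (hx : x ∉ Ω) :
    cappedComplDist Ω G x = 0 := by
  refine le_antisymm (cappedComplDist_le_of_mem hG0 (mem_insert_of_mem 1 ?_))
    (le_csInf (insert_nonempty _ _) (zero_mem_lowerBounds_complCurveLengths hG0 x))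
  exact ⟨0, fun _ => x, le_rfl, (LipschitzWith.const x).lipschitzOnWith.weaken zero_le_one, hx,
    rfl, intervalIntegral.integral_same⟩

theorem cappedComplDist_eq_one (hG0 : ∀ x, 0 ≤ G x) {x : X}
    (hG : ∀ L γ, 0 ≤ L → LipschitzOnWith 1 γ (Icc 0 L) → γ 0 ∉ Ω → γ L = x →
      1 ≤ ∫ t in 0..L, G (γ t)) :
    cappedComplDist Ω G x = 1 := by
  refine le_antisymm (cappedComplDist_le_of_mem hG0 (mem_insert 1 _))
    (le_csInf (insert_nonempty _ _) ?_)
  rintro r (rfl | ⟨L, γ, hL, hγ, h0, hLx, rfl⟩)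
  exacts [le_rfl, hG L γ hL hγ h0 hLx]

theorem varCap_le_lintegral [MeasurableSpace X] {p : ℝ} {μ : Measure X} {E : Set X}
    {u g : X → ℝ} (hu1 : ∀ x ∈ E, u x = 1) (hu0 : ∀ x ∉ Ω, u x = 0)
    (hug : IsUpperGradient u g) (hg0 : ∀ x, 0 ≤ g x) :
    varCap p μ E Ω ≤ ∫⁻ x in Ω, ENNReal.ofReal (g x ^ p) ∂μ :=
  iInf₂_le_of_le u ⟨hu1, hu0⟩ (iInf₂_le g ⟨hug, hg0⟩)

theorem varCap_le_of_one_le_integral [MeasurableSpace X] {p : ℝ} {μ : Measure X} {E : Set X}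
    (hG0 : ∀ x, 0 ≤ G x)
    (hG : ∀ L γ, 0 ≤ L → LipschitzOnWith 1 γ (Icc 0 L) → γ 0 ∉ Ω → γ L ∈ E →
      1 ≤ ∫ t in 0..L, G (γ t)) :
    varCap p μ E Ω ≤ ∫⁻ x in Ω, ENNReal.ofReal (G x ^ p) ∂μ :=
  varCap_le_lintegral
    (fun _ hx => cappedComplDist_eq_one hG0 fun L γ hL hγ h0 hLx => hG L γ hL hγ h0 (hLx ▸ hx))
    (fun _ hx => cappedComplDist_eq_zero hG0 hx) (isUpperGradient_cappedComplDist hG0) hG0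

end CurveCapacity

theorem mul_add_mul_eq_zero_of_forall_le_rpow {p a b A B : ℝ} (hp : p ≠ 0)
    (h : ∀ᶠ ε in 𝓝 0, A + B ≤ A * (1 + a * ε) ^ p + B * (1 + b * ε) ^ p) :
    a * A + b * B = 0 := by
  set F : ℝ → ℝ := fun ε => A * (1 + a * ε) ^ p + B * (1 + b * ε) ^ p
  have hmin : IsLocalMin F 0 := by
    filter_upwards [h] with ε hε
    simpa [F] using hε
  have hderiv : ∀ c : ℝ, HasDerivAt (fun ε : ℝ => (1 + c * ε) ^ p) (c * p) 0 := fun c => by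
    simpa using (((hasDerivAt_id (0 : ℝ)).const_mul c).const_add 1).rpow_const (p := p)
      (Or.inl (by simp))
  have hF := ((hderiv a).const_mul A).add ((hderiv b).const_mul B)
  have hcrit : p * (a * A + b * B) = 0 := by
    linear_combination hmin.hasDerivAt_eq_zero hF
  exact (mul_eq_zero.1 hcrit).resolve_left hp

theorem lintegral_rpow_mul_indicator_compl_add {α : Type*} [MeasurableSpace α] {ν : Measure α}
    {U : Set α} (hU : MeasurableSet U) {p a b : ℝ} (ha : 0 ≤ a) (hb : 0 ≤ b) {f₁ f₂ : α → ℝ}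
    (hf₁ : ∀ x, 0 ≤ f₁ x) (hf₂ : ∀ x, 0 ≤ f₂ x) :
    ∫⁻ x, ENNReal.ofReal ((a * Uᶜ.indicator f₁ x + b * U.indicator f₂ x) ^ p) ∂ν =
      ENNReal.ofReal (a ^ p) * ∫⁻ x in Uᶜ, ENNReal.ofReal (f₁ x ^ p) ∂ν +
        ENNReal.ofReal (b ^ p) * ∫⁻ x in U, ENNReal.ofReal (f₂ x ^ p) ∂ν := by
  rw [← lintegral_add_compl _ hU, add_comm, ← lintegral_const_mul' _ _ ENNReal.ofReal_ne_top,
    ← lintegral_const_mul' _ _ ENNReal.ofReal_ne_top]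
  congr 1
  · refine setLIntegral_congr_fun hU.compl fun x hx => ?_
    rw [indicator_of_mem hx, indicator_of_notMem hx, mul_zero, add_zero, Real.mul_rpow ha (hf₁ x),
      ENNReal.ofReal_mul (Real.rpow_nonneg ha _)]
  · refine setLIntegral_congr_fun hU fun x hx => ?_
    rw [indicator_of_mem hx, indicator_of_notMem (notMem_compl_iff.2 hx), mul_zero, zero_add,
      Real.mul_rpow hb (hf₂ x), ENNReal.ofReal_mul (Real.rpow_nonneg hb _)]

section CapacitaryPotential

variable {X : Type*} {Ω : Set X} {u g : X → ℝ} {M L : ℝ} {γ : ℝ → X}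

theorem setOf_lt_subset (hM : 0 ≤ M) (hu0 : ∀ x ∉ Ω, u x = 0) : {x | M < u x} ⊆ Ω :=
  fun x hx => by_contra fun h => (hu0 x h ▸ hx : M < 0).not_ge hM

variable [MetricSpace X]

theorem LowerSemicontinuousOn.isOpen_setOf_lt_of_subset (hlsc : LowerSemicontinuousOn u Ω)
    (hΩ : IsOpen Ω) (hsub : {x | M < u x} ⊆ Ω) : IsOpen {x | M < u x} :=
  isOpen_iff_mem_nhds.2 fun x hx => by
    have := hlsc x (hsub hx) M hx
    rwa [nhdsWithin_eq_nhds.2 (hΩ.mem_nhds (hsub hx))] at this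

theorem IsUpperGradient.le_integral_indicator_compl_setOf_lt (hug : IsUpperGradient u g)
    (hg0 : ∀ x, 0 ≤ g x) (hU : IsOpen {x | M < u x}) (hM0 : 0 < M) (hL : 0 ≤ L)
    (hγ : LipschitzOnWith 1 γ (Icc 0 L)) (h0 : u (γ 0) ≤ 0) (hM : M ≤ u (γ L)) :
    M ≤ ∫ τ in 0..L, {x | M < u x}ᶜ.indicator g (γ τ) := by
  simpa only [sub_zero] using
    hug.sub_le_integral_indicator (S := {x | M < u x}ᶜ) hg0 hL hγ hM0 h0 hM
      (fun _ hx => not_lt.2 hx.2.le)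
      (intervalIntegrable_indicator_compl_comp_of_isOpen hU hL hγ.continuousOn
        (hug.intervalIntegrable_of_ne hL hγ (by linarith)))

theorem IsUpperGradient.one_sub_le_integral_indicator_setOf_lt (hug : IsUpperGradient u g)
    (hg0 : ∀ x, 0 ≤ g x) (hU : IsOpen {x | M < u x}) (hM1 : M < 1) (hL : 0 ≤ L)
    (hγ : LipschitzOnWith 1 γ (Icc 0 L)) (h0 : u (γ 0) ≤ M) (h1 : 1 ≤ u (γ L)) :
    1 - M ≤ ∫ τ in 0..L, {x | M < u x}.indicator g (γ τ) :=
  hug.sub_le_integral_indicator hg0 hL hγ hM1 h0 h1 (fun _ hx => hx.1)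
    (intervalIntegrable_indicator_comp_of_isOpen hU hL hγ.continuousOn
      (hug.intervalIntegrable_of_ne hL hγ (by linarith)))

theorem one_le_integral_superlevel_competitor {E : Set X} (hu1 : ∀ x ∈ E, u x = 1)
    (hu0 : ∀ x ∉ Ω, u x = 0) (hug : IsUpperGradient u g) (hg0 : ∀ x, 0 ≤ g x)
    (hU : IsOpen {x | M < u x}) (hM0 : 0 < M) (hM1 : M < 1) {v h : X → ℝ}
    (hv1 : ∀ x ∈ {x | M < u x}, v x = 1) (hv0 : ∀ x ∉ Ω, v x = 0) (hvh : IsUpperGradient v h)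
    (hh0 : ∀ x, 0 ≤ h x) (hL : 0 ≤ L) (hγ : LipschitzOnWith 1 γ (Icc 0 L)) (h0 : γ 0 ∉ Ω)
    (hLE : γ L ∈ E) :
    1 ≤ ∫ τ in 0..L,
      (M * {x | M < u x}ᶜ.indicator h (γ τ) + 1 * {x | M < u x}.indicator g (γ τ)) := by
  have hu0' : u (γ 0) = 0 := hu0 _ h0
  have hu1' : u (γ L) = 1 := hu1 _ hLE
  have hv0' : v (γ 0) = 0 := hv0 _ h0
  have hv1' : v (γ L) = 1 := hv1 _ (show M < u (γ L) by rw [hu1']; exact hM1)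
  have hIh := hvh.intervalIntegrable_of_ne hL hγ (by rw [hv0', hv1']; exact one_ne_zero)
  have hIg := hug.intervalIntegrable_of_ne hL hγ (by rw [hu0', hu1']; exact one_ne_zero)
  have hh : 1 ≤ ∫ τ in 0..L, {x | M < u x}ᶜ.indicator h (γ τ) := by
    simpa only [sub_zero] using
      hvh.sub_le_integral_indicator (S := {x | M < u x}ᶜ) hh0 hL hγ one_pos hv0'.le hv1'.ge
        (fun x hx hxU => hx.2.ne (hv1 x hxU))
        (intervalIntegrable_indicator_compl_comp_of_isOpen hU hL hγ.continuousOn hIh)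
  have hg := hug.one_sub_le_integral_indicator_setOf_lt hg0 hU hM1 hL hγ
    (by rw [hu0']; exact hM0.le) hu1'.ge
  rw [intervalIntegral.integral_add
    ((intervalIntegrable_indicator_compl_comp_of_isOpen hU hL hγ.continuousOn hIh).const_mul M)
    ((intervalIntegrable_indicator_comp_of_isOpen hU hL hγ.continuousOn hIg).const_mul 1),
    intervalIntegral.integral_const_mul, intervalIntegral.integral_const_mul]
  nlinarith

variable [MeasurableSpace X] [OpensMeasurableSpace X] {μ : Measure X} {p : ℝ} {E : Set X}

theorem varCap_le_of_weights (hu1 : ∀ x ∈ E, u x = 1) (hu0 : ∀ x ∉ Ω, u x = 0)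
    (hug : IsUpperGradient u g) (hg0 : ∀ x, 0 ≤ g x) (hU : IsOpen {x | M < u x}) (hM0 : 0 < M)
    (hM1 : M < 1) {a b : ℝ} (ha : 0 ≤ a) (hb : 0 ≤ b) (hab : a * M + b * (1 - M) = 1) :
    varCap p μ E Ω ≤
      ENNReal.ofReal (a ^ p) *
          ∫⁻ x in {x | M < u x}ᶜ, ENNReal.ofReal (g x ^ p) ∂μ.restrict Ω +
        ENNReal.ofReal (b ^ p) *
          ∫⁻ x in {x | M < u x}, ENNReal.ofReal (g x ^ p) ∂μ.restrict Ω := by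
  set U := {x | M < u x}
  rw [← lintegral_rpow_mul_indicator_compl_add hU.measurableSet ha hb hg0 hg0]
  refine varCap_le_of_one_le_integral (fun x => add_nonneg
    (mul_nonneg ha (indicator_nonneg (fun x _ => hg0 x) x))
    (mul_nonneg hb (indicator_nonneg (fun x _ => hg0 x) x))) fun L γ hL hγ h0 hLE => ?_
  have h0' : u (γ 0) = 0 := hu0 _ h0
  have h1 : u (γ L) = 1 := hu1 _ hLE
  have hI := hug.intervalIntegrable_of_ne hL hγ (by rw [h0', h1]; exact one_ne_zero)
  rw [intervalIntegral.integral_add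
    ((intervalIntegrable_indicator_compl_comp_of_isOpen hU hL hγ.continuousOn hI).const_mul a)
    ((intervalIntegrable_indicator_comp_of_isOpen hU hL hγ.continuousOn hI).const_mul b),
    intervalIntegral.integral_const_mul, intervalIntegral.integral_const_mul, ← hab]
  gcongr
  · exact hug.le_integral_indicator_compl_setOf_lt hg0 hU hM0 hL hγ h0'.le (h1 ▸ hM1.le)
  · exact hug.one_sub_le_integral_indicator_setOf_lt hg0 hU hM1 hL hγ
      (by rw [h0']; exact hM0.le) h1.ge

theorem varCap_setOf_lt_le (hu0 : ∀ x ∉ Ω, u x = 0) (hug : IsUpperGradient u g)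
    (hg0 : ∀ x, 0 ≤ g x) (hU : IsOpen {x | M < u x}) (hM0 : 0 < M) (hp : p ≠ 0) :
    varCap p μ {x ∈ Ω | M < u x} Ω ≤
      ENNReal.ofReal (M ^ (-p)) *
        ∫⁻ x in {x | M < u x}ᶜ, ENNReal.ofReal (g x ^ p) ∂μ.restrict Ω := by
  have henergy := lintegral_rpow_mul_indicator_compl_add (ν := μ.restrict Ω) (p := p)
    hU.measurableSet (inv_nonneg.2 hM0.le) le_rfl hg0 hg0
  rw [Real.zero_rpow hp, ENNReal.ofReal_zero, zero_mul, add_zero, Real.inv_rpow hM0.le,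
    ← Real.rpow_neg hM0.le] at henergy
  rw [← henergy]
  refine varCap_le_of_one_le_integral (fun x => by
    simpa using mul_nonneg (inv_nonneg.2 hM0.le) (indicator_nonneg (fun x _ => hg0 x) x))
    fun L γ hL hγ h0 hLE => ?_
  have hM := hug.le_integral_indicator_compl_setOf_lt hg0 hU hM0 hL hγ (hu0 _ h0).le hLE.2.le
  simp only [zero_mul, add_zero, intervalIntegral.integral_const_mul]
  rwa [le_inv_mul_iff₀ hM0, mul_one]

theorem varCap_le_of_superlevel_competitor (hu1 : ∀ x ∈ E, u x = 1) (hu0 : ∀ x ∉ Ω, u x = 0)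
    (hug : IsUpperGradient u g) (hg0 : ∀ x, 0 ≤ g x) (hU : IsOpen {x | M < u x}) (hM0 : 0 < M)
    (hM1 : M < 1) {v h : X → ℝ} (hv1 : ∀ x ∈ {x ∈ Ω | M < u x}, v x = 1)
    (hv0 : ∀ x ∉ Ω, v x = 0) (hvh : IsUpperGradient v h) (hh0 : ∀ x, 0 ≤ h x) :
    varCap p μ E Ω ≤ ENNReal.ofReal (M ^ p) * ∫⁻ x in Ω, ENNReal.ofReal (h x ^ p) ∂μ +
      ∫⁻ x in {x | M < u x}, ENNReal.ofReal (g x ^ p) ∂μ.restrict Ω := by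
  set U := {x | M < u x}
  have hvU : ∀ x ∈ U, v x = 1 := fun x hx => hv1 x ⟨setOf_lt_subset hM0.le hu0 hx, hx⟩
  calc varCap p μ E Ω
      ≤ ∫⁻ x in Ω, ENNReal.ofReal ((M * Uᶜ.indicator h x + 1 * U.indicator g x) ^ p) ∂μ :=
        varCap_le_of_one_le_integral (fun x => add_nonneg
          (mul_nonneg hM0.le (indicator_nonneg (fun x _ => hh0 x) x))
          (mul_nonneg zero_le_one (indicator_nonneg (fun x _ => hg0 x) x)))
          fun _ _ hL hγ h0 hLE =>
            one_le_integral_superlevel_competitor hu1 hu0 hug hg0 hU hM0 hM1 hvU hv0 hvh hh0 hL hγ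
              h0 hLE
    _ = ENNReal.ofReal (M ^ p) * ∫⁻ x in Uᶜ, ENNReal.ofReal (h x ^ p) ∂μ.restrict Ω +
        ∫⁻ x in U, ENNReal.ofReal (g x ^ p) ∂μ.restrict Ω := by
      rw [lintegral_rpow_mul_indicator_compl_add hU.measurableSet hM0.le zero_le_one hh0 hg0,
        Real.one_rpow, ENNReal.ofReal_one, one_mul]
    _ ≤ _ := by
      gcongr ENNReal.ofReal (M ^ p) * ?_ + _
      exact setLIntegral_le_lintegral _ _

theorem lintegral_compl_setOf_lt_add (hU : IsOpen {x | M < u x}) :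
    ∫⁻ x in {x | M < u x}ᶜ, ENNReal.ofReal (g x ^ p) ∂μ.restrict Ω +
        ∫⁻ x in {x | M < u x}, ENNReal.ofReal (g x ^ p) ∂μ.restrict Ω =
      ∫⁻ x in Ω, ENNReal.ofReal (g x ^ p) ∂μ := by
  rw [add_comm, lintegral_add_compl _ hU.measurableSet]

theorem le_varCap_setOf_lt (hu1 : ∀ x ∈ E, u x = 1) (hu0 : ∀ x ∉ Ω, u x = 0)
    (hug : IsUpperGradient u g) (hg0 : ∀ x, 0 ≤ g x) (hU : IsOpen {x | M < u x}) (hM0 : 0 < M)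
    (hM1 : M < 1) (hmin : ∫⁻ x in Ω, ENNReal.ofReal (g x ^ p) ∂μ = varCap p μ E Ω)
    (hfin : varCap p μ E Ω ≠ ⊤) :
    ENNReal.ofReal (M ^ (-p)) *
        ∫⁻ x in {x | M < u x}ᶜ, ENNReal.ofReal (g x ^ p) ∂μ.restrict Ω ≤
      varCap p μ {x ∈ Ω | M < u x} Ω := by
  have hsplit := lintegral_compl_setOf_lt_add (μ := μ) (Ω := Ω) (g := g) (p := p) hU
  rw [hmin] at hsplit
  have hB := ne_top_of_le_ne_top hfin (hsplit ▸ le_add_self)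
  refine le_iInf₂ fun v hv => le_iInf₂ fun h hh => ?_
  have hcomp := varCap_le_of_superlevel_competitor (p := p) (μ := μ) hu1 hu0 hug hg0 hU hM0 hM1
    hv.1 hv.2 hh.1 hh.2
  rw [← hsplit, ENNReal.add_le_add_iff_right hB] at hcomp
  calc _ ≤ ENNReal.ofReal (M ^ (-p)) *
        (ENNReal.ofReal (M ^ p) * ∫⁻ x in Ω, ENNReal.ofReal (h x ^ p) ∂μ) := by gcongr
    _ = ∫⁻ x in Ω, ENNReal.ofReal (h x ^ p) ∂μ := by
      rw [← mul_assoc, ← ENNReal.ofReal_mul (Real.rpow_nonneg hM0.le _), ← Real.rpow_add hM0,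
        neg_add_cancel, Real.rpow_zero, ENNReal.ofReal_one, one_mul]

theorem lintegral_compl_setOf_lt_eq (hp : p ≠ 0) (hu1 : ∀ x ∈ E, u x = 1)
    (hu0 : ∀ x ∉ Ω, u x = 0) (hug : IsUpperGradient u g) (hg0 : ∀ x, 0 ≤ g x)
    (hU : IsOpen {x | M < u x}) (hM0 : 0 < M) (hM1 : M < 1)
    (hmin : ∫⁻ x in Ω, ENNReal.ofReal (g x ^ p) ∂μ = varCap p μ E Ω)
    (hfin : varCap p μ E Ω ≠ ⊤) :
    ∫⁻ x in {x | M < u x}ᶜ, ENNReal.ofReal (g x ^ p) ∂μ.restrict Ω =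
      ENNReal.ofReal M * varCap p μ E Ω := by
  set A := ∫⁻ x in {x | M < u x}ᶜ, ENNReal.ofReal (g x ^ p) ∂μ.restrict Ω
  set B := ∫⁻ x in {x | M < u x}, ENNReal.ofReal (g x ^ p) ∂μ.restrict Ω
  have hsplit : A + B = varCap p μ E Ω := (lintegral_compl_setOf_lt_add hU).trans hmin
  have hA : A ≠ ⊤ := ne_top_of_le_ne_top hfin (hsplit ▸ le_self_add)
  have hB : B ≠ ⊤ := ne_top_of_le_ne_top hfin (hsplit ▸ le_add_self)
  have hvar : ∀ᶠ ε in 𝓝 (0 : ℝ), A.toReal + B.toReal ≤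
      A.toReal * (1 + (1 - M) * ε) ^ p + B.toReal * (1 + -M * ε) ^ p := by
    filter_upwards [Ioo_mem_nhds neg_one_lt_zero one_pos] with ε hε
    have ha : 0 ≤ 1 + (1 - M) * ε := by nlinarith [hε.1, hε.2]
    have hb : 0 ≤ 1 + -M * ε := by nlinarith [hε.1, hε.2]
    have hw := varCap_le_of_weights (p := p) (μ := μ) hu1 hu0 hug hg0 hU hM0 hM1 ha hb (by ring)
    rw [← hsplit] at hw
    have hw' := ENNReal.toReal_mono (by finiteness) hw
    rwa [ENNReal.toReal_add hA hB, ENNReal.toReal_add (by finiteness) (by finiteness),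
      ENNReal.toReal_mul, ENNReal.toReal_mul, ENNReal.toReal_ofReal (Real.rpow_nonneg ha _),
      ENNReal.toReal_ofReal (Real.rpow_nonneg hb _), mul_comm _ A.toReal,
      mul_comm _ B.toReal] at hw'
  have hcrit := mul_add_mul_eq_zero_of_forall_le_rpow hp hvar
  have hAM : A.toReal = M * (varCap p μ E Ω).toReal := by
    rw [← hsplit, ENNReal.toReal_add hA hB]
    linarith
  rw [← ENNReal.ofReal_toReal hA, hAM, ENNReal.ofReal_mul hM0.le, ENNReal.ofReal_toReal hfin]

end CapacitaryPotential

theorem superlevel_capacity_general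
    {X : Type*} [MetricSpace X] [MeasurableSpace X] [BorelSpace X]
    (μ : Measure X) (p : ℝ) (hp : 1 < p)
    (Ω : Set X) (hΩo : IsOpen Ω)
    (E : Set X)
    (uE gE : X → ℝ)
    (hadm : (∀ x ∈ E, uE x = 1) ∧ ∀ x ∉ Ω, uE x = 0)
    (hug : IsUpperGradient uE gE) (hg0 : ∀ x, 0 ≤ gE x)
    (hlsc : LowerSemicontinuousOn uE Ω)
    (hmin : ∫⁻ x in Ω, ENNReal.ofReal (gE x ^ p) ∂μ = varCap p μ E Ω)
    (hfin : varCap p μ E Ω < ⊤)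
    (M : ℝ) (hM0 : 0 < M) (hM1 : M < 1) :
    varCap p μ {x ∈ Ω | M < uE x} Ω = ENNReal.ofReal (M ^ (1 - p)) * varCap p μ E Ω := by
  obtain ⟨hu1, hu0⟩ := hadm
  have hp0 : p ≠ 0 := (zero_lt_one.trans hp).ne'
  have hU : IsOpen {x | M < uE x} :=
    hlsc.isOpen_setOf_lt_of_subset hΩo (setOf_lt_subset hM0.le hu0)
  have hscale : ENNReal.ofReal (M ^ (1 - p)) * varCap p μ E Ω =
      ENNReal.ofReal (M ^ (-p)) *
        ∫⁻ x in {x | M < uE x}ᶜ, ENNReal.ofReal (gE x ^ p) ∂μ.restrict Ω := by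
    rw [lintegral_compl_setOf_lt_eq hp0 hu1 hu0 hug hg0 hU hM0 hM1 hmin hfin.ne, ← mul_assoc,
      ← ENNReal.ofReal_mul (Real.rpow_nonneg hM0.le _), ← Real.rpow_add_one hM0.ne',
      neg_add_eq_sub]
  rw [hscale]
  exact le_antisymm (varCap_setOf_lt_le hu0 hug hg0 hU hM0 hp0)
    (le_varCap_setOf_lt hu1 hu0 hug hg0 hU hM0 hM1 hmin hfin.ne)

/-- Proposition 4.1. If `u_E` is the (lsc-regularized) capacitary
potential of `E` in the bounded open set `Ω`, with minimal upper gradient `g_E`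
realizing the capacity, and `0 < M < 1`, then
`cap_p({u_E > M}, Ω) = M^{1-p} · cap_p(E, Ω)`. -/
theorem superlevel_capacity
    {X : Type*} [MetricSpace X] [MeasurableSpace X] [BorelSpace X] [CompleteSpace X]
    (μ : Measure X) (p : ℝ) (hp : 1 < p)
    (hunb : ¬ Bornology.IsBounded (Set.univ : Set X))
    (hdoub : IsDoubling μ) (hPI : SupportsPoincare p μ)
    (Ω : Set X) (hΩo : IsOpen Ω) (hΩb : Bornology.IsBounded Ω) (hΩne : Ω.Nonempty)
    (E : Set X) (hE : E ⊆ Ω)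
    (uE gE : X → ℝ)
    (hadm : (∀ x ∈ E, uE x = 1) ∧ ∀ x ∉ Ω, uE x = 0)
    (hug : IsUpperGradient uE gE) (hg0 : ∀ x, 0 ≤ gE x)
    (hlsc : LowerSemicontinuousOn uE Ω)
    (hmin : ∫⁻ x in Ω, ENNReal.ofReal (gE x ^ p) ∂μ = varCap p μ E Ω)
    (hfin : varCap p μ E Ω < ⊤)
    (M : ℝ) (hM0 : 0 < M) (hM1 : M < 1) :
    varCap p μ {x ∈ Ω | M < uE x} Ω = ENNReal.ofReal (M ^ (1 - p)) * varCap p μ E Ω :=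
  superlevel_capacity_general μ p hp Ω hΩo E uE gE hadm hug hg0 hlsc hmin hfin M hM0 hM1
end

section
/- Suppose an open set U in a metric space X satisfies the interior corkscrew condition with parameters κ ∈ (0,1), 0 and R₂, and let 0 < ε < κR₂/2. Then U ⊂ U_ε[2ε/κ], where U_ε[ρ] = {x ∈ X : dist(x, U_ε) < ρ} is the ρ-neighborhood of the ε-interior U_ε of U. -/
/-! Given `x ∈ U`, apply the corkscrew condition at scale `r = 2ε/κ < R₂`: it yields a ball
`B(y, 2ε) ⊆ U ∩ B(x, r)`. Its centre `y` lies at distance at least `2ε > ε` from `X ∖ U`, so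
`y ∈ U_ε`, and `dist(x, y) < r`. If `U = X` there is nothing to prove, as then `U_ε = ∅` and
`Metric.infDist x ∅ = 0`. -/

open Metric Set

/-- `U` satisfies the interior corkscrew condition with parameters `κ`, `R₁`, `R₂`:
for every `x ∈ U` and `R₁ < r < R₂`, the set `U ∩ B(x,r)` contains a ball of
radius `κr`. -/
def Corkscrew {X : Type*} [MetricSpace X] (U : Set X) (κ R₁ R₂ : ℝ) : Prop :=
  ∀ x ∈ U, ∀ r : ℝ, R₁ < r → r < R₂ → ∃ y : X, ball y (κ*r) ⊆ U ∩ ball x r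

/-- The `ε`-interior of `U`. -/
noncomputable def epsInterior {X : Type*} [MetricSpace X] (U : Set X) (ε : ℝ) : Set X :=
  {x ∈ U | ε < Metric.infDist x Uᶜ}

section

variable {X : Type*} [MetricSpace X] {U : Set X} {y : X} {ε r : ℝ}

lemma le_infDist_compl_of_ball_subset (hU : Uᶜ.Nonempty) (h : ball y r ⊆ U) :
    r ≤ infDist y Uᶜ :=
  (le_infDist hU).2 fun _ hz => not_lt.1 fun hzy => hz (h (mem_ball'.2 hzy))

lemma mem_epsInterior_of_ball_subset (hU : Uᶜ.Nonempty) (h : ball y r ⊆ U) (hε : 0 ≤ ε)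
    (hεr : ε < r) : y ∈ epsInterior U ε :=
  ⟨h (mem_ball_self (hε.trans_lt hεr)), hεr.trans_le (le_infDist_compl_of_ball_subset hU h)⟩

lemma epsInterior_univ (hε : 0 ≤ ε) : epsInterior (univ : Set X) ε = ∅ := by
  ext x
  simp [epsInterior, hε]

lemma Corkscrew.exists_mem_epsInterior_dist_lt {κ R₁ R₂ : ℝ} (hck : Corkscrew U κ R₁ R₂)
    (hU : Uᶜ.Nonempty) {x : X} (hx : x ∈ U) (hR₁ : R₁ < r) (hR₂ : r < R₂) (hε : 0 ≤ ε)
    (hεr : ε < κ * r) : ∃ y ∈ epsInterior U ε, dist x y < r := by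
  obtain ⟨y, hy⟩ := hck x hx r hR₁ hR₂
  refine ⟨y, mem_epsInterior_of_ball_subset hU (hy.trans inter_subset_left) hε hεr, ?_⟩
  exact mem_ball'.1 (hy (mem_ball_self (hε.trans_lt hεr))).2

end

theorem subset_neighborhood_epsInterior_general {X : Type*} [MetricSpace X]
    (U : Set X) (κ R₂ : ℝ) (hκ0 : 0 < κ)
    (hck : Corkscrew U κ 0 R₂) (ε : ℝ) (hε0 : 0 < ε) (hε : ε < κ*R₂/2) :
    U ⊆ {x : X | Metric.infDist x (epsInterior U ε) < 2*ε/κ} := by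
  intro x hx
  have hr : 0 < 2*ε/κ := by positivity
  rcases Uᶜ.eq_empty_or_nonempty with hUc | hUc
  · rw [compl_empty_iff.1 hUc, epsInterior_univ hε0.le, mem_ofPred_eq, infDist_empty]
    exact hr
  · have hrR₂ : 2*ε/κ < R₂ := by rw [div_lt_iff₀ hκ0]; linarith
    have hεκr : ε < κ * (2*ε/κ) := by rw [mul_div_cancel₀ _ hκ0.ne']; linarith
    obtain ⟨y, hy, hxy⟩ := hck.exists_mem_epsInterior_dist_lt hUc hx hr hrR₂ hε0.le hεκr
    exact (infDist_le_dist_of_mem hy).trans_lt hxy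

/-- Lemma 6.3 (ii). If `U` satisfies the interior corkscrew condition
with parameters `κ, 0, R₂` and `0 < ε < κR₂/2`, then `U ⊆ U_ε[2ε/κ]`, the
`(2ε/κ)`-neighborhood of the `ε`-interior of `U`. -/
theorem subset_neighborhood_epsInterior {X : Type*} [MetricSpace X]
    (U : Set X) (hU : IsOpen U) (κ R₂ : ℝ) (hκ0 : 0 < κ) (hκ1 : κ < 1)
    (hck : Corkscrew U κ 0 R₂) (ε : ℝ) (hε0 : 0 < ε) (hε : ε < κ*R₂/2) :
    U ⊆ {x : X | Metric.infDist x (epsInterior U ε) < 2*ε/κ} :=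
  subset_neighborhood_epsInterior_general U κ R₂ hκ0 hck ε hε0 hε
end

section
/- Let U be a bounded c_J-John domain in a metric space X with 0 < c_J ≤ 1. Then U satisfies the interior corkscrew condition with parameters κ = c_J²/4, 0, and diam(U): for every x ∈ U and every 0 < r < diam(U), the set U ∩ B(x,r) contains an open ball of radius c_J²r/4. -/
/-! Along a John curve from `x`, the arc length from `x` dominates the distance to `x`, so every
point `y` of the curve satisfies `c · d(x, y) ≤ d(y, Uᶜ)`. If the John center `z` lies within
`r/2` of `x`, it is the center of the corkscrew ball: since `diam U > r`, some point of `U` is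
farther than `r/2` from `z`, whence `d(z, Uᶜ) ≥ c r/2`. Otherwise the curve from `x` to `z` crosses
the sphere `S(x, r/2)` at a point `y` with `d(y, Uᶜ) ≥ c r/2`. In both cases
`B(y, c² r/4) ⊆ B(y, c r/2) ⊆ U ∩ B(x, r)`. -/

open Metric Set

/-- `U` is a `c`-John domain with John center `z`: every `x ∈ U` connects to `z` by a
rectifiable curve `γ : [0,1] → U` such that `c · ℓ(γ|[0,t]) ≤ dist(γ t, X∖U)` for all
`t ∈ [0,1]`, where `ℓ` denotes arc length (total variation). -/
def IsJohnWith {X : Type*} [MetricSpace X] (c : ℝ) (U : Set X) (z : X) : Prop :=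
  z ∈ U ∧ ∀ x ∈ U, ∃ γ : ℝ → X, ContinuousOn γ (Set.Icc 0 1) ∧
    γ 0 = x ∧ γ 1 = z ∧ (∀ t ∈ Set.Icc (0:ℝ) 1, γ t ∈ U) ∧
    eVariationOn γ (Set.Icc 0 1) ≠ ⊤ ∧
    ∀ t ∈ Set.Icc (0:ℝ) 1,
      c * (eVariationOn γ (Set.Icc 0 t)).toReal ≤ Metric.infDist (γ t) Uᶜ

/-- `U` is a `c`-John domain. -/
def IsJohnDomain {X : Type*} [MetricSpace X] (c : ℝ) (U : Set X) : Prop :=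
  ∃ z : X, IsJohnWith c U z

theorem dist_le_eVariationOn_toReal {α E : Type*} [LinearOrder α] [PseudoMetricSpace E]
    {f : α → E} {s : Set α} (hs : eVariationOn f s ≠ ⊤) {a b : α} (ha : a ∈ s) (hb : b ∈ s) :
    dist (f a) (f b) ≤ (eVariationOn f s).toReal := by
  rw [dist_edist]
  exact ENNReal.toReal_mono hs (eVariationOn.edist_le f ha hb)

theorem exists_half_lt_dist_of_lt_diam {X : Type*} [PseudoMetricSpace X] {s : Set X} {r : ℝ}
    (hr : 0 ≤ r) (hrs : r < diam s) (z : X) : ∃ w ∈ s, r / 2 < dist w z := by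
  by_contra! h
  refine (diam_le_of_forall_dist_le hr fun a ha b hb => ?_).not_gt hrs
  calc dist a b ≤ dist a z + dist b z := dist_triangle_right a b z
    _ ≤ r := by linarith [h a ha, h b hb]

namespace IsJohnWith

variable {X : Type*} [MetricSpace X] {c : ℝ} {U : Set X} {z : X}

theorem exists_path_mul_dist_le_infDist (hJ : IsJohnWith c U z) (hc : 0 ≤ c) {x : X}
    (hx : x ∈ U) :
    ∃ γ : ℝ → X, ContinuousOn γ (Icc 0 1) ∧ γ 0 = x ∧ γ 1 = z ∧
      ∀ t ∈ Icc (0 : ℝ) 1, c * dist x (γ t) ≤ infDist (γ t) Uᶜ := by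
  obtain ⟨γ, hγc, hγ0, hγ1, -, hfin, hγJ⟩ := hJ.2 x hx
  refine ⟨γ, hγc, hγ0, hγ1, fun t ht => le_trans ?_ (hγJ t ht)⟩
  have hfin_t : eVariationOn γ (Icc 0 t) ≠ ⊤ :=
    ne_top_of_le_ne_top hfin (eVariationOn.mono γ (Icc_subset_Icc_right ht.2))
  rw [← hγ0]
  exact mul_le_mul_of_nonneg_left
    (dist_le_eVariationOn_toReal hfin_t (left_mem_Icc.2 ht.1) (right_mem_Icc.2 ht.1)) hc

theorem mul_dist_le_infDist_center (hJ : IsJohnWith c U z) (hc : 0 ≤ c) {w : X} (hw : w ∈ U) :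
    c * dist w z ≤ infDist z Uᶜ := by
  obtain ⟨γ, -, -, hγ1, hγ⟩ := hJ.exists_path_mul_dist_le_infDist hc hw
  simpa [hγ1] using hγ 1 (right_mem_Icc.2 zero_le_one)

theorem exists_dist_le_half_mul_half_le_infDist (hJ : IsJohnWith c U z) (hc : 0 ≤ c)
    {x : X} (hx : x ∈ U) {r : ℝ} (hr : 0 ≤ r) (hrU : r < diam U) :
    ∃ y, dist x y ≤ r / 2 ∧ c * (r / 2) ≤ infDist y Uᶜ := by
  by_cases hxz : dist x z ≤ r / 2
  · obtain ⟨w, hw, hwz⟩ := exists_half_lt_dist_of_lt_diam hr hrU z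
    exact ⟨z, hxz,
      (mul_le_mul_of_nonneg_left hwz.le hc).trans (hJ.mul_dist_le_infDist_center hc hw)⟩
  obtain ⟨γ, hγc, hγ0, hγ1, hγ⟩ := hJ.exists_path_mul_dist_le_infDist hc hx
  have hcross : r / 2 ∈ (fun t => dist x (γ t)) '' Icc 0 1 :=
    intermediate_value_Icc zero_le_one
      ((continuous_const.dist continuous_id).comp_continuousOn hγc)
      ⟨by simpa [hγ0] using div_nonneg hr zero_le_two, by simpa [hγ1] using (not_le.1 hxz).le⟩
  obtain ⟨t, ht, hxt⟩ := hcross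
  exact ⟨γ t, hxt.le, hxt ▸ hγ t ht⟩

end IsJohnWith

theorem john_corkscrew_general {X : Type*} [MetricSpace X]
    (c : ℝ) (hc0 : 0 < c) (hc1 : c ≤ 1)
    (U : Set X)
    (hJ : IsJohnDomain c U) :
    ∀ x ∈ U, ∀ r : ℝ, 0 < r → r < Metric.diam U →
      ∃ y : X, ball y (c^2*r/4) ⊆ U ∩ ball x r := by
  intro x hx r hr hrU
  obtain ⟨z, hJz⟩ := hJ
  obtain ⟨y, hxy, hy⟩ := hJz.exists_dist_le_half_mul_half_le_infDist hc0.le hx hr.le hrU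
  have hc2 : c ^ 2 ≤ c := by nlinarith
  refine ⟨y, subset_inter ?_ (ball_subset_ball' ?_)⟩
  · exact (ball_subset_ball (by nlinarith)).trans ball_infDist_compl_subset
  · rw [dist_comm]
    nlinarith

/-- Lemma 8.11. A bounded `c_J`-John domain satisfies the interior
corkscrew condition with parameters `c_J²/4`, `0` and `diam(U)`: for every `x ∈ U` and
`0 < r < diam(U)`, `U ∩ B(x,r)` contains an open ball of radius `c_J²r/4`. -/
theorem john_corkscrew {X : Type*} [MetricSpace X]
    (c : ℝ) (hc0 : 0 < c) (hc1 : c ≤ 1)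
    (U : Set X) (hUo : IsOpen U) (hUc : IsConnected U)
    (hUb : Bornology.IsBounded U) (hUne : Uᶜ.Nonempty)
    (hJ : IsJohnDomain c U) :
    ∀ x ∈ U, ∀ r : ℝ, 0 < r → r < Metric.diam U →
      ∃ y : X, ball y (c^2*r/4) ⊆ U ∩ ball x r :=
  john_corkscrew_general c hc0 hc1 U hJ
end
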